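/- arXiv:1706.00145 — 2 statements merged into one kernel-verified Lean document; each statement's English description precedes it below -/
import Mathlib

section
/- With η as in the previous setting (the revlex-least partition of |μ| of length m − ℓ(μ) + 1 that is ≥_revlex μ), let ν be the greatest partition (in reverse lexicographic order) of |μ| with ℓ(ν) = ℓ(μ) and ν ≤_revlex η, and let i* be the least index with η_{i*} < μ_{i*}. Then μ = ν if and only if μ_{i*} − μ_{ℓ(μ)} ≤ 1. -/
/-!
If `μ_{i*} ≤ μ_{ℓ(μ)} + 1` and `μ <_revlex ν ≤_revlex η`, then `ν` first falls below `μ` at some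
index `k ≥ i*` (before `i*`, `η` agrees with `μ`), and from there on
`ν_j ≤ ν_k < μ_k ≤ μ_{i*} ≤ μ_{ℓ(μ)} + 1 ≤ μ_j + 1`; so `ν ≤ μ` pointwise and `|ν| < |μ|`.

If `μ_{i*} ≥ μ_{ℓ(μ)} + 2`, let `a ≥ i*` be the last index with `μ_a = μ_{i*}`, keep `μ` below `a`
and spread the rest greedily over `ℓ(μ) - a` parts of size at most `μ_{i*} - 1`; the gap is
what makes this fit. The result `ρ` satisfies `μ <_revlex ρ`, and `η <_revlex ρ` is impossible:
`η_j ≤ μ_{i*} - 1` for `j ≥ i*`, so the first index where `η` exceeds `ρ` lies past the full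
parts of `ρ`, after which `ρ` has only parts `1`, while `η` has at least as many parts as `ρ`
and would end up with the larger sum.
-/

/-- `RevlexLt p q`: `p <_revlex q`, i.e. at the first index where the part sequences
differ, `p` has the larger part. -/
def RevlexLt (p q : ℕ → ℕ) : Prop := ∃ i, q i < p i ∧ ∀ j < i, p j = q j

open Finset

namespace RevlexLt

variable {p q : ℕ → ℕ}

theorem irrefl (p : ℕ → ℕ) : ¬ RevlexLt p p := fun ⟨_, h, _⟩ => h.false

theorem asymm (h : RevlexLt p q) : ¬ RevlexLt q p := by
  obtain ⟨i, hi, hpi⟩ := h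
  rintro ⟨j, hj, hpj⟩
  rcases lt_trichotomy i j with hij | rfl | hji
  · exact hi.ne (hpj i hij)
  · exact hi.asymm hj
  · exact hj.ne (hpi j hji)

theorem lt_or_gt_of_ne (h : p ≠ q) : RevlexLt p q ∨ RevlexLt q p := by
  have hex : ∃ i, p i ≠ q i := Function.ne_iff.1 h
  have hpre (j) (hj : j < Nat.find hex) : p j = q j := not_not.1 (Nat.find_min hex hj)
  rcases (Nat.find_spec hex).lt_or_gt with hlt | hgt
  · exact .inr ⟨_, hlt, fun j hj => (hpre j hj).symm⟩
  · exact .inl ⟨_, hgt, hpre⟩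

end RevlexLt

theorem not_revlexLt_iff {p q : ℕ → ℕ} : ¬ RevlexLt q p ↔ p = q ∨ RevlexLt p q := by
  refine ⟨fun h => ?_, ?_⟩
  · by_cases hpq : p = q
    · exact .inl hpq
    · exact .inr ((RevlexLt.lt_or_gt_of_ne hpq).resolve_right h)
  · rintro (rfl | h)
    · exact RevlexLt.irrefl p
    · exact h.asymm

section Tails

variable {p : ℕ → ℕ} {L m : ℕ}

theorem sum_Ico_eq_sum_Ico_of_eq_zero (hp : ∀ k, L ≤ k → p k = 0) (hLm : L ≤ m) (s : ℕ) :
    ∑ k ∈ Ico s m, p k = ∑ k ∈ Ico s L, p k := by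
  refine (sum_subset (Ico_subset_Ico_right hLm) fun k hk hkL => hp k ?_).symm
  simp only [mem_Ico, not_and, not_lt] at hk hkL
  exact hkL hk.1

theorem eq_zero_of_length (hp : ∀ k, p k ≠ 0 ↔ k < L) {k : ℕ} (hk : L ≤ k) : p k = 0 :=
  not_not.1 fun h => hk.not_gt ((hp k).1 h)

theorem sub_le_sum_Ico_of_length (hp : ∀ k, p k ≠ 0 ↔ k < L) (hLm : L ≤ m) (s : ℕ) :
    L - s ≤ ∑ k ∈ Ico s m, p k := by
  rw [sum_Ico_eq_sum_Ico_of_eq_zero (fun k => eq_zero_of_length hp) hLm]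
  simpa using card_nsmul_le_sum (Ico s L) p 1 fun k hk =>
    Nat.one_le_iff_ne_zero.2 ((hp k).2 (mem_Ico.1 hk).2)

theorem sum_Ico_le_sub_of_length (hp : ∀ k, p k ≠ 0 ↔ k < L) (hLm : L ≤ m) {s : ℕ}
    (hone : ∀ k, s ≤ k → p k ≤ 1) : ∑ k ∈ Ico s m, p k ≤ L - s := by
  rw [sum_Ico_eq_sum_Ico_of_eq_zero (fun k => eq_zero_of_length hp) hLm]
  simpa using sum_le_card_nsmul (Ico s L) p 1 fun k hk => hone k (mem_Ico.1 hk).1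

end Tails

/-- The amount landing in slot `i` when `E` units are poured, in order, into slots of
capacity `d`. -/
def pour (d E i : ℕ) : ℕ := min d (E - i * d)

theorem pour_le (d E i : ℕ) : pour d E i ≤ d := min_le_left _ _

theorem antitone_pour (d E : ℕ) : Antitone (pour d E) := fun _ _ hij =>
  min_le_min_left _ (Nat.sub_le_sub_left (Nat.mul_le_mul_right _ hij) _)

theorem sum_range_pour (d E k : ℕ) : ∑ i ∈ range k, pour d E i = min E (k * d) := by
  induction k with
  | zero => simp
  | succ k ih =>
    rw [sum_range_succ, ih, pour, Nat.succ_mul]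
    omega

theorem pour_eq_zero {d E i j : ℕ} (hi : pour d E i < d) (hij : i < j) : pour d E j = 0 := by
  have : i * d + d ≤ j * d := by rw [← Nat.succ_mul]; exact Nat.mul_le_mul_right _ hij
  simp only [pour] at hi ⊢
  omega

def refill (μ : ℕ → ℕ) (a L d E j : ℕ) : ℕ :=
  if j < a then μ j else if j < L then 1 + pour d E (j - a) else 0

section Refill

variable {μ : ℕ → ℕ} {a L d E : ℕ}

theorem refill_of_lt {j : ℕ} (hj : j < a) : refill μ a L d E j = μ j := if_pos hj

theorem refill_ne_zero_iff (hμ : ∀ j, μ j ≠ 0 ↔ j < L) (j : ℕ) :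
    refill μ a L d E j ≠ 0 ↔ j < L := by
  unfold refill
  split_ifs <;> simp [*]

theorem antitone_refill (hμ : Antitone μ) (hμd : ∀ j < a, d + 1 ≤ μ j) :
    Antitone (refill μ a L d E) := by
  refine antitone_nat_of_succ_le fun j => ?_
  have hstep : pour d E (j + 1 - a) ≤ pour d E (j - a) := antitone_pour d E (by omega)
  have hle := pour_le d E (j - a)
  have hμj : μ (j + 1) ≤ μ j := hμ (by omega)
  have hμd' := hμd j
  unfold refill
  split_ifs <;> omega

theorem refill_self (haL : a < L) (hdE : d ≤ E) : refill μ a L d E a = d + 1 := by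
  simp only [refill, lt_irrefl, if_false, if_pos haL, Nat.sub_self, pour, zero_mul,
    Nat.sub_zero, min_eq_left hdE, add_comm]

theorem refill_le_one {j : ℕ} (haj : a ≤ j) (hj : refill μ a L d E j ≤ d) :
    ∀ k, j < k → refill μ a L d E k ≤ 1 := by
  intro k hjk
  have hpour (hjL : j < L) : pour d E (k - a) = 0 := by
    simp only [refill, haj.not_gt, hjL, if_false, if_true] at hj
    exact pour_eq_zero (i := j - a) (by omega) (by omega)
  unfold refill
  split_ifs <;> omega

theorem sum_range_refill {m : ℕ} (haL : a ≤ L) (hLm : L ≤ m) (hE : E ≤ (L - a) * d) :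
    ∑ j ∈ range m, refill μ a L d E j = ∑ j ∈ range a, μ j + (L - a + E) := by
  have hzero (j) (hj : L ≤ j) : refill μ a L d E j = 0 := by
    simp [refill, hj.not_gt, (haL.trans hj).not_gt]
  rw [← sum_range_add_sum_Ico _ (haL.trans hLm), sum_Ico_eq_sum_Ico_of_eq_zero hzero hLm,
    sum_Ico_eq_sum_range]
  congr 1
  · exact sum_congr rfl fun j hj => refill_of_lt (mem_range.1 hj)
  · have htail (i) (hi : i ∈ range (L - a)) : refill μ a L d E (a + i) = 1 + pour d E i := by
      have : a + i < L := by rw [mem_range] at hi; omega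
      simp [refill, this]
    rw [sum_congr rfl htail, sum_add_distrib, sum_range_pour, sum_const, card_range,
      smul_eq_mul, mul_one, min_eq_left hE]

end Refill

theorem Antitone.exists_last_eq {μ : ℕ → ℕ} (hμ : Antitone μ) {i n : ℕ} (h : μ n < μ i) :
    ∃ a, i ≤ a ∧ a < n ∧ μ a = μ i ∧ μ (a + 1) < μ i := by
  have hin : i < n := lt_of_not_ge fun hni => (hμ hni).not_gt h
  have hex : ∃ a, i ≤ a ∧ μ (a + 1) < μ i :=
    ⟨n - 1, by omega, by rwa [Nat.sub_add_cancel (by omega)]⟩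
  obtain ⟨hia, hdrop⟩ := Nat.find_spec hex
  refine ⟨Nat.find hex, hia, ?_, le_antisymm (hμ hia) ?_, hdrop⟩
  · have := Nat.find_min' hex (m := n - 1) ⟨by omega, by rwa [Nat.sub_add_cancel (by omega)]⟩
    omega
  · rcases hia.eq_or_lt with heq | hlt
    · rw [← heq]
    · have := Nat.find_min hex (m := Nat.find hex - 1) (by omega)
      rw [Nat.sub_add_cancel (by omega)] at this
      exact not_lt.1 fun h => this ⟨by omega, h⟩

theorem Antitone.sum_Ico_lt_mul {μ : ℕ → ℕ} (hμ : Antitone μ) {s L b : ℕ} (hsL : s < L)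
    (hs : μ s ≤ b) (hlast : μ (L - 1) < b) : ∑ j ∈ Ico s L, μ j < (L - s) * b := by
  rw [← smul_eq_mul, ← Nat.card_Ico, ← sum_const]
  exact sum_lt_sum (fun j hj => (hμ (mem_Ico.1 hj).1).trans hs)
    ⟨L - 1, mem_Ico.2 ⟨by omega, by omega⟩, hlast⟩

theorem le_of_tail_le_one {ρ η : ℕ → ℕ} {L ℓ m j : ℕ} (hρ : ∀ k, ρ k ≠ 0 ↔ k < L)
    (hη : ∀ k, η k ≠ 0 ↔ k < ℓ) (hLℓ : L ≤ ℓ) (hℓm : ℓ ≤ m)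
    (hsum : ∑ k ∈ range m, ρ k = ∑ k ∈ range m, η k) (hpre : ∀ k < j, η k = ρ k)
    (hone : ∀ k, j < k → ρ k ≤ 1) : η j ≤ ρ j := by
  by_contra! hlt
  have hjm : j < m := ((hη j).1 (by omega)).trans_le hℓm
  have hρtail := sum_Ico_le_sub_of_length hρ (hLℓ.trans hℓm) (s := j + 1) fun k hk => hone k hk
  have hηtail := sub_le_sum_Ico_of_length hη hℓm (j + 1)
  have hhead : ∑ k ∈ range j, η k = ∑ k ∈ range j, ρ k :=
    sum_congr rfl fun k hk => hpre k (mem_range.1 hk)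
  rw [← sum_range_add_sum_Ico ρ (show j + 1 ≤ m from hjm), sum_range_succ,
    ← sum_range_add_sum_Ico η (show j + 1 ≤ m from hjm), sum_range_succ] at hsum
  omega

theorem exists_revlexLt_not_revlexLt_of_gap {μ η : ℕ → ℕ} {L ℓ m i : ℕ} (hμa : Antitone μ)
    (hμlen : ∀ j, μ j ≠ 0 ↔ j < L) (hηa : Antitone η) (hηlen : ∀ j, η j ≠ 0 ↔ j < ℓ)
    (hLℓ : L ≤ ℓ) (hℓm : ℓ ≤ m) (hsum : ∑ j ∈ range m, η j = ∑ j ∈ range m, μ j)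
    (hpre : ∀ j < i, μ j = η j) (hi : η i < μ i) (hgap : μ (L - 1) + 2 ≤ μ i) :
    ∃ ρ, Antitone ρ ∧ (∀ j, ρ j ≠ 0 ↔ j < L) ∧ ∑ j ∈ range m, ρ j = ∑ j ∈ range m, μ j ∧
      RevlexLt μ ρ ∧ ¬ RevlexLt η ρ := by
  have hiL : i < L := (hμlen i).1 (by omega)
  obtain ⟨a, hia, haL, hμa_eq, hdrop⟩ := hμa.exists_last_eq (i := i) (n := L - 1) (by omega)
  set d := μ i - 2
  set T := ∑ j ∈ Ico (a + 1) L, μ j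
  have hT_lo : L - (a + 1) ≤ T := sub_le_sum_Ico_of_length hμlen le_rfl _
  have hT_hi : T < (L - (a + 1)) * (d + 1) :=
    hμa.sum_Ico_lt_mul (by omega) (by omega) (by omega)
  set E := μ i + T - (L - a)
  have hEk : E ≤ (L - a) * d := by
    obtain ⟨K, hK⟩ : ∃ K, L - a = K + 1 := ⟨L - a - 1, by omega⟩
    rw [show L - (a + 1) = K by omega, mul_add_one] at hT_hi
    rw [hK, add_one_mul]
    omega
  have hρsum : ∑ j ∈ range m, refill μ a L d E j = ∑ j ∈ range m, μ j := by
    rw [sum_range_refill (by omega) (by omega) hEk,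
      ← sum_range_add_sum_Ico μ (show a ≤ m by omega),
      sum_Ico_eq_sum_Ico_of_eq_zero (fun k => eq_zero_of_length hμlen) (by omega),
      sum_eq_sum_Ico_succ_bot (by omega)]
    omega
  refine ⟨refill μ a L d E, antitone_refill hμa fun j hj => ?_, refill_ne_zero_iff hμlen, hρsum,
    ⟨a, ?_, fun j hj => (refill_of_lt hj).symm⟩, ?_⟩
  · have := hμa hj.le
    omega
  · rw [refill_self (by omega) (by omega)]
    omega
  rintro ⟨j, hj, hjpre⟩
  have hij : i ≤ j := not_lt.1 fun hji => hj.ne <| by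
    rw [refill_of_lt (by omega), hpre j hji]
  have hjd : refill μ a L d E j ≤ d := by
    have := hηa hij
    omega
  have haj : a ≤ j := not_lt.1 fun hja => by
    have := hμa hja.le
    rw [refill_of_lt hja] at hjd
    omega
  exact hj.not_ge <| le_of_tail_le_one (refill_ne_zero_iff hμlen) hηlen hLℓ hℓm
    (hρsum.trans hsum.symm) hjpre (refill_le_one haj hjd)

theorem sum_range_lt_of_first_lt_of_flat {μ ν : ℕ → ℕ} {L m k : ℕ} (hμa : Antitone μ)
    (hμlen : ∀ j, μ j ≠ 0 ↔ j < L) (hνa : Antitone ν) (hνlen : ∀ j, ν j ≠ 0 ↔ j < L)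
    (hLm : L ≤ m) (hk : ν k < μ k) (hpre : ∀ j < k, μ j = ν j) (hflat : μ k ≤ μ (L - 1) + 1) :
    ∑ j ∈ range m, ν j < ∑ j ∈ range m, μ j := by
  have hkL : k < L := (hμlen k).1 (by omega)
  refine sum_lt_sum (fun j _ => ?_) ⟨k, mem_range.2 (by omega), hk⟩
  rcases lt_or_ge j k with hjk | hkj
  · exact (hpre j hjk).ge
  rcases lt_or_ge j L with hjL | hLj
  · have := hνa hkj
    have := hμa (show j ≤ L - 1 by omega)
    omega
  · simp [eq_zero_of_length hνlen hLj]

theorem mu_eq_nu_iff_general (m L : ℕ) (μ η ν : ℕ → ℕ)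
    (hLm : 2 * L ≤ m)
    (hμa : Antitone μ) (hμlen : ∀ i, μ i ≠ 0 ↔ i < L)
    (hηa : Antitone η) (hηlen : ∀ i, η i ≠ 0 ↔ i < m - L + 1)
    (hηsum : ∑ i ∈ Finset.range m, η i = ∑ i ∈ Finset.range m, μ i)
    (hηge : η = μ ∨ RevlexLt μ η)
    (hνa : Antitone ν) (hνlen : ∀ i, ν i ≠ 0 ↔ i < L)
    (hνsum : ∑ i ∈ Finset.range m, ν i = ∑ i ∈ Finset.range m, μ i)
    (hνle : ν = η ∨ RevlexLt ν η)
    (hνmax : ∀ ρ : ℕ → ℕ, Antitone ρ → (∀ i, ρ i ≠ 0 ↔ i < L) →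
      ∑ i ∈ Finset.range m, ρ i = ∑ i ∈ Finset.range m, μ i →
      (ρ = η ∨ RevlexLt ρ η) → (ρ = ν ∨ RevlexLt ρ ν))
    (istar : ℕ) (histar : η istar < μ istar) (histar' : ∀ j < istar, ¬ η j < μ j) :
    (∀ i, μ i = ν i) ↔ μ istar ≤ μ (L - 1) + 1 := by
  have hpre : ∀ j < istar, μ j = η j := by
    obtain rfl | ⟨i, hi, hpre⟩ := hηge
    · exact absurd histar (lt_irrefl _)
    · exact fun j hj => hpre j (hj.trans_le (not_lt.1 fun h => histar' i h hi))
  have hνη : RevlexLt ν η := hνle.resolve_left fun h =>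
    lt_irrefl L ((hνlen L).1 (h ▸ (hηlen L).2 (by omega)))
  constructor
  · intro hμν
    by_contra! hgap
    have hiL : istar < L := (hμlen istar).1 (by omega)
    obtain ⟨ρ, hρa, hρlen, hρsum, hμρ, hηρ⟩ := exists_revlexLt_not_revlexLt_of_gap hμa hμlen hηa
      hηlen (by omega) (by omega) hηsum hpre histar hgap
    have hνμ : ν = μ := funext fun i => (hμν i).symm
    have hρν := hνmax ρ hρa hρlen hρsum (not_revlexLt_iff.1 hηρ)
    rw [hνμ] at hρν
    exact not_revlexLt_iff.2 hρν hμρ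
  · intro hflat
    obtain h | ⟨k, hk, hkpre⟩ := hνmax μ hμa hμlen rfl (.inr ⟨istar, histar, hpre⟩)
    · exact congrFun h
    have hik : istar ≤ k := not_lt.1 fun hki => hνη.asymm
      ⟨k, hpre k hki ▸ hk, fun j hj => (hpre j (hj.trans hki)).symm.trans (hkpre j hj)⟩
    exact absurd hνsum (sum_range_lt_of_first_lt_of_flat hμa hμlen hνa hνlen (by omega) hk
      hkpre ((hμa hik).trans hflat)).ne

/-- With `η` the revlex-least partition of `|μ|` of length `m - ℓ(μ) + 1` that is
`≥_revlex μ`, let `ν` be the revlex-greatest partition of `|μ|` with `ℓ(ν) = ℓ(μ)` and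
`ν ≤_revlex η`, and `i*` the least index with `η_{i*} < μ_{i*}`. Then `μ = ν` if and only
if `μ_{i*} - μ_{ℓ(μ)} ≤ 1`. -/
theorem mu_eq_nu_iff (m L : ℕ) (μ η ν : ℕ → ℕ)
    (hL2 : 2 ≤ L) (hLm : 2 * L ≤ m)
    (hμa : Antitone μ) (hμlen : ∀ i, μ i ≠ 0 ↔ i < L) (hμ1 : μ 0 ≤ m - 1)
    (hηa : Antitone η) (hηlen : ∀ i, η i ≠ 0 ↔ i < m - L + 1)
    (hηsum : ∑ i ∈ Finset.range m, η i = ∑ i ∈ Finset.range m, μ i)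
    (hηge : η = μ ∨ RevlexLt μ η)
    (hηmin : ∀ ρ : ℕ → ℕ, Antitone ρ → (∀ i, ρ i ≠ 0 ↔ i < m - L + 1) →
      ∑ i ∈ Finset.range m, ρ i = ∑ i ∈ Finset.range m, μ i →
      (ρ = μ ∨ RevlexLt μ ρ) → (η = ρ ∨ RevlexLt η ρ))
    (hνa : Antitone ν) (hνlen : ∀ i, ν i ≠ 0 ↔ i < L)
    (hνsum : ∑ i ∈ Finset.range m, ν i = ∑ i ∈ Finset.range m, μ i)
    (hνle : ν = η ∨ RevlexLt ν η)
    (hνmax : ∀ ρ : ℕ → ℕ, Antitone ρ → (∀ i, ρ i ≠ 0 ↔ i < L) →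
      ∑ i ∈ Finset.range m, ρ i = ∑ i ∈ Finset.range m, μ i →
      (ρ = η ∨ RevlexLt ρ η) → (ρ = ν ∨ RevlexLt ρ ν))
    (istar : ℕ) (histar : η istar < μ istar) (histar' : ∀ j < istar, ¬ η j < μ j) :
    (∀ i, μ i = ν i) ↔ μ istar ≤ μ (L - 1) + 1 :=
  mu_eq_nu_iff_general m L μ η ν hLm hμa hμlen hηa hηlen hηsum hηge hνa hνlen hνsum hνle hνmax istar
    histar histar'
end

section
/- Let m ≥ 1. For t, ℓ, s with 1 ≤ t ≤ m−1, 0 ≤ ℓ ≤ m/2, s ≥ 0, define g_{t,ℓ,s,m} as the number of monomials x_t^{f_t} x_{t+1}^{f_{t+1}} ··· x_{m−1}^{f_{m−1}} with f_t = s, total degree ∑_j f_j = ℓ, satisfying (i−1)f_i + i·f_{i+1} ≤ m − 2∑_{j=i}^{m−1} f_j for all 1 ≤ i ≤ m−2 (with f_i = 0 for i < t). Then g satisfies: g_{t,ℓ,s,m} = ∑_{j=0}^{ℓ−s} H(m − 2ℓ − t·j − (t−1)·s) · g_{t+1, ℓ−s, j, m} if m − 2ℓ ≥ (t−1)s, and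 g_{t,ℓ,s,m} = 0 otherwise, where H(n) = 1 if n ≥ 0 and 0 otherwise, with boundary condition g_{m,ℓ,s,m} = 1 if ℓ = s = 0 and 0 otherwise. -/
/-- Tuples `(f_t, …, f_{m-1})` of nonnegative integers (as functions `ℕ → ℕ` supported on
`[t, m-1]`) satisfying `(i-1)f_i + i·f_{i+1} ≤ m - 2∑_{j=i}^{m-1} f_j` for `1 ≤ i ≤ m-2`. -/
def OkTuple (m t : ℕ) (f : ℕ → ℕ) : Prop :=
  (∀ p, p < t → f p = 0) ∧ (∀ p, m ≤ p → f p = 0) ∧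
  ∀ i, 1 ≤ i → i ≤ m - 2 →
    (i - 1) * f i + i * f (i + 1) + 2 * ∑ j ∈ Finset.Ico i m, f j ≤ m

/-- `g_{t,ℓ,s,m}`: the number of such tuples with `f_t = s` and total sum `ℓ`. -/
noncomputable def gcount (t ℓ s m : ℕ) : ℕ :=
  Nat.card {f : ℕ → ℕ // OkTuple m t f ∧ f t = s ∧ ∑ j ∈ Finset.range m, f j = ℓ}

/-- The Heaviside function: `H(n) = 1` if `n ≥ 0`, else `0`. -/
def Heaviside (n : ℤ) : ℕ := if 0 ≤ n then 1 else 0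

/-! Peeling off the first variable: deleting `f_t = s` from a tuple counted by `g_{t,ℓ,s,m}`
leaves a tuple counted by `g_{t+1,ℓ-s,f_{t+1},m}`. The constraints with `i > t` do not see `f_t`,
those with `i < t - 1` reduce to `2ℓ ≤ m`, and those at `i = t - 1` and `i = t` read
`(t-1)s + 2ℓ ≤ m` and `(t-1)s + t·f_{t+1} + 2ℓ ≤ m`. The last one implies the others and is the
Heaviside factor; if `(t-1)s + 2ℓ > m` it fails for every `f_{t+1}`, so no tuple exists.
At `t = m` only the zero tuple is left. -/

open Finset Function

theorem Nat.card_eq_sum_card_inter_fiber {α : Type*} {S : Set α} (hS : S.Finite) (φ : α → ℕ)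
    {n : ℕ} (hφ : ∀ x ∈ S, φ x < n) :
    Nat.card S = ∑ j ∈ range n, Nat.card ↑(S ∩ {x | φ x = j}) := by
  classical
  lift S to Finset α using hS
  have hfiber (j : ℕ) : (S : Set α) ∩ {x | φ x = j} = ↑{x ∈ S | φ x = j} := by
    ext; simp
  simp only [hfiber, Nat.card_coe_set_eq, Set.ncard_coe_finset]
  exact card_eq_sum_card_fiberwise fun x hx => mem_range.2 (hφ x hx)

theorem Finset.sum_update_add_apply {ι M : Type*} [DecidableEq ι] [AddCommMonoid M]
    {s : Finset ι} {i : ι} (hi : i ∈ s) (f : ι → M) (b : M) :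
    ∑ j ∈ s, update f i b j + f i = b + ∑ j ∈ s, f j := by
  rw [sum_update_of_mem hi, sdiff_singleton_eq_erase, add_assoc, sum_erase_add _ _ hi]

theorem sum_Ico_eq_sum_range_of_eq_zero {M : Type*} [AddCommMonoid M] {f : ℕ → M} {i m : ℕ}
    (hf : ∀ p < i, f p = 0) (him : i ≤ m) :
    ∑ j ∈ Ico i m, f j = ∑ j ∈ range m, f j := by
  rw [← sum_range_add_sum_Ico f him, sum_eq_zero fun p hp => hf p (mem_range.1 hp), zero_add]

theorem finite_setOf_sum_range_eq (m ℓ : ℕ) :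
    {f : ℕ → ℕ | (∀ p, m ≤ p → f p = 0) ∧ ∑ j ∈ range m, f j = ℓ}.Finite := by
  refine Set.Finite.of_finite_image (f := fun f (i : Fin m) => f i)
    ((Set.Finite.pi fun _ => Set.finite_Iic ℓ).subset ?_) ?_
  · rintro _ ⟨f, ⟨-, hsum⟩, rfl⟩ i -
    exact hsum ▸ single_le_sum (fun _ _ => Nat.zero_le _) (mem_range.2 i.2)
  · intro f hf g hg hfg
    funext p
    rcases lt_or_ge p m with hp | hp
    · exact congrFun hfg ⟨p, hp⟩
    · rw [hf.1 p hp, hg.1 p hp]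

namespace OkTuple

variable {m t : ℕ} {f : ℕ → ℕ}

theorem sum_Ico_eq (hf : OkTuple m t f) {i : ℕ} (hit : i ≤ t) (him : i ≤ m) :
    ∑ j ∈ Ico i m, f j = ∑ j ∈ range m, f j :=
  sum_Ico_eq_sum_range_of_eq_zero (fun p hp => hf.1 p (by omega)) him

theorem eq_zero_of_le (hf : OkTuple m t f) (hmt : m ≤ t) : f = 0 := by
  funext p
  rcases lt_or_ge p t with hp | hp
  · exact hf.1 p hp
  · exact hf.2.1 p (hmt.trans hp)

theorem of_le {t' : ℕ} {g : ℕ → ℕ} (hf : OkTuple m t f) (hgf : g ≤ f)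
    (hg : ∀ p < t', g p = 0) : OkTuple m t' g := by
  refine ⟨hg, fun p hp => Nat.eq_zero_of_le_zero ((hgf p).trans_eq (hf.2.1 p hp)),
    fun i hi1 hi2 => le_trans ?_ (hf.2.2 i hi1 hi2)⟩
  gcongr <;> exact hgf _

theorem update_zero (hf : OkTuple m t f) : OkTuple m (t + 1) (update f t 0) := by
  refine hf.of_le (fun p => ?_) fun p hp => ?_ <;> rw [update_apply] <;> split_ifs
  exacts [Nat.zero_le _, le_rfl, rfl, hf.1 p (by omega)]

theorem add_apply_succ_le_sum (hf : OkTuple m t f) (htm : t < m) :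
    f t + f (t + 1) ≤ ∑ j ∈ range m, f j := by
  rcases lt_or_ge (t + 1) m with ht1m | ht1m
  · rw [← sum_pair (by omega : t ≠ t + 1)]
    exact sum_le_sum_of_subset fun p hp => by simp at hp ⊢; omega
  · rw [hf.2.1 _ ht1m, add_zero]
    exact single_le_sum (fun _ _ => Nat.zero_le _) (mem_range.2 htm)

theorem constraint_at_start (hf : OkTuple m t f) (ht : 1 ≤ t) (htm : t < m)
    (hsum : 2 * ∑ j ∈ range m, f j ≤ m) :
    (t - 1) * f t + t * f (t + 1) + 2 * ∑ j ∈ range m, f j ≤ m := by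
  rcases lt_or_ge (t + 1) m with ht1m | ht1m
  · simpa only [hf.sum_Ico_eq le_rfl htm.le] using hf.2.2 t ht (by omega)
  -- For `t = m - 1` there is no constraint at `i = t`, but `f m = 0` and the one at `i = t - 1`
  -- (where `f (t - 1) = 0`) gives the same bound.
  rw [hf.2.1 _ ht1m, mul_zero, add_zero]
  rcases eq_or_lt_of_le ht with rfl | ht
  · simpa using hsum
  have h := hf.2.2 (t - 1) (by omega) (by omega)
  rwa [hf.1 (t - 1) (by omega), Nat.sub_add_cancel ht.le, hf.sum_Ico_eq (by omega) (by omega),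
    mul_zero, zero_add] at h

theorem update_of_constraint {g : ℕ → ℕ} {s : ℕ} (hg : OkTuple m (t + 1) g) (htm : t < m)
    (hbound : (t - 1) * s + t * g (t + 1) + 2 * (s + ∑ j ∈ range m, g j) ≤ m) :
    OkTuple m t (update g t s) := by
  have hlow : ∀ p < t, update g t s p = 0 := fun p hp => by
    rw [update_of_ne hp.ne, hg.1 p (by omega)]
  have hsum : ∑ j ∈ range m, update g t s j = s + ∑ j ∈ range m, g j := by
    simpa [hg.1 t (by omega)] using sum_update_add_apply (mem_range.2 htm) g s
  refine ⟨hlow, fun p hp => by rw [update_of_ne (by omega), hg.2.1 p hp], fun i hi1 hi2 => ?_⟩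
  rcases lt_trichotomy i t with hit | rfl | hit
  · have hsucc : i * update g t s (i + 1) ≤ (t - 1) * s := by
      rw [update_apply]
      split_ifs with h
      · exact Nat.mul_le_mul_right s (by omega)
      · rw [hg.1 (i + 1) (by omega), mul_zero]; exact Nat.zero_le _
    rw [hlow i hit, mul_zero, zero_add, sum_Ico_eq_sum_range_of_eq_zero (fun p hp => hlow p
      (by omega)) (by omega), hsum]
    omega
  · rwa [update_self, update_of_ne (by omega), sum_Ico_eq_sum_range_of_eq_zero hlow htm.le, hsum]
  · have hagree : ∀ p, t < p → update g t s p = g p := fun p hp => update_of_ne hp.ne' _ _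
    rw [hagree i hit, hagree (i + 1) (by omega),
      sum_congr rfl fun p hp => hagree p (by have := (mem_Ico.1 hp).1; omega)]
    exact hg.2.2 i hi1 hi2

end OkTuple

def okTuples (m t ℓ s : ℕ) : Set (ℕ → ℕ) :=
  {f | OkTuple m t f ∧ f t = s ∧ ∑ j ∈ range m, f j = ℓ}

theorem gcount_eq_card_okTuples (t ℓ s m : ℕ) : gcount t ℓ s m = Nat.card (okTuples m t ℓ s) :=
  rfl

theorem okTuples_finite (m t ℓ s : ℕ) : (okTuples m t ℓ s).Finite :=
  (finite_setOf_sum_range_eq m ℓ).subset fun _ hf => ⟨hf.1.2.1, hf.2.2⟩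

theorem okTuples_self (m ℓ s : ℕ) : okTuples m m ℓ s = {f | f = 0 ∧ ℓ = 0 ∧ s = 0} := by
  ext f
  constructor
  · rintro ⟨hf, rfl, rfl⟩
    obtain rfl := hf.eq_zero_of_le le_rfl
    simp
  · rintro ⟨rfl, rfl, rfl⟩
    exact ⟨⟨fun _ _ => rfl, fun _ _ => rfl, fun _ _ _ => by simp⟩, rfl, by simp⟩

theorem gcount_self (m ℓ s : ℕ) : gcount m ℓ s m = if ℓ = 0 ∧ s = 0 then 1 else 0 := by
  rw [gcount_eq_card_okTuples, okTuples_self]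
  split_ifs with h <;> simp [h]

variable {m t ℓ s : ℕ}

theorem update_zero_mem_okTuples {f : ℕ → ℕ} {j : ℕ}
    (hf : f ∈ okTuples m t ℓ s ∩ {f | f (t + 1) = j}) (htm : t < m) :
    update f t 0 ∈ okTuples m (t + 1) (ℓ - s) j := by
  obtain ⟨⟨hok, rfl, rfl⟩, rfl⟩ := hf
  refine ⟨hok.update_zero, update_of_ne (by omega) _ _, ?_⟩
  have := sum_update_add_apply (mem_range.2 htm) f 0
  omega

theorem update_mem_okTuples {g : ℕ → ℕ} {j : ℕ} (hg : g ∈ okTuples m (t + 1) (ℓ - s) j)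
    (hs : s ≤ ℓ) (htm : t < m) (hbound : (t - 1) * s + t * j + 2 * ℓ ≤ m) :
    update g t s ∈ okTuples m t ℓ s ∩ {f | f (t + 1) = j} := by
  obtain ⟨hok, rfl, hsum⟩ := hg
  have hsum' := sum_update_add_apply (mem_range.2 htm) g s
  rw [hok.1 t (by omega), add_zero, hsum] at hsum'
  refine ⟨⟨hok.update_of_constraint htm ?_, update_self .., by omega⟩,
    update_of_ne (by omega) _ _⟩
  rwa [hsum, Nat.add_sub_cancel' hs]

def okTuplesFiberEquiv {j : ℕ} (hs : s ≤ ℓ) (htm : t < m)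
    (hbound : (t - 1) * s + t * j + 2 * ℓ ≤ m) :
    ↑(okTuples m t ℓ s ∩ {f | f (t + 1) = j}) ≃ okTuples m (t + 1) (ℓ - s) j where
  toFun f := ⟨update f t 0, update_zero_mem_okTuples f.2 htm⟩
  invFun g := ⟨update g t s, update_mem_okTuples g.2 hs htm hbound⟩
  left_inv f := Subtype.ext <| by
    simp only [update_idem, update_eq_self_iff]
    exact f.2.1.2.1.symm
  right_inv g := Subtype.ext <| by
    simp only [update_idem, update_eq_self_iff]
    exact (g.2.1.1 t (by omega)).symm

theorem heaviside_eq_ite {j : ℕ} (ht : 1 ≤ t) :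
    Heaviside ((m : ℤ) - 2 * ℓ - t * j - ((t : ℤ) - 1) * s) =
      if (t - 1) * s + t * j + 2 * ℓ ≤ m then 1 else 0 := by
  rw [Heaviside, show (t : ℤ) - 1 = ((t - 1 : ℕ) : ℤ) by omega]
  split_ifs <;> omega

theorem card_okTuples_inter_fiber (ht : 1 ≤ t) (htm : t < m) (hℓ : 2 * ℓ ≤ m) (hs : s ≤ ℓ)
    (j : ℕ) :
    Nat.card ↑(okTuples m t ℓ s ∩ {f | f (t + 1) = j}) =
      Heaviside ((m : ℤ) - 2 * ℓ - t * j - ((t : ℤ) - 1) * s) * gcount (t + 1) (ℓ - s) j m := by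
  rw [heaviside_eq_ite ht]
  split_ifs with hbound
  · rw [one_mul, gcount_eq_card_okTuples]
    exact Nat.card_congr (okTuplesFiberEquiv hs htm hbound)
  · rw [zero_mul]
    refine @Nat.card_of_isEmpty _ ⟨?_⟩
    rintro ⟨f, ⟨hf, rfl, rfl⟩, rfl⟩
    exact hbound (hf.constraint_at_start ht htm hℓ)

theorem gcount_eq_sum_card_okTuples_inter_fiber (htm : t < m) (hs : s ≤ ℓ) :
    gcount t ℓ s m =
      ∑ j ∈ range (ℓ - s + 1), Nat.card ↑(okTuples m t ℓ s ∩ {f | f (t + 1) = j}) := by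
  refine Nat.card_eq_sum_card_inter_fiber (okTuples_finite m t ℓ s) (· (t + 1)) ?_
  rintro f ⟨hf, rfl, rfl⟩
  have := hf.add_apply_succ_le_sum htm
  omega

/-- The recursion in `t` for `g_{t,ℓ,s,m}`: for `1 ≤ t ≤ m-1`, `0 ≤ ℓ ≤ m/2`, `s ≤ ℓ`,
`g_{t,ℓ,s,m} = ∑_{j=0}^{ℓ-s} H(m - 2ℓ - t·j - (t-1)·s) · g_{t+1,ℓ-s,j,m}` when
`m - 2ℓ ≥ (t-1)s`, and `g_{t,ℓ,s,m} = 0` otherwise; boundary condition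
`g_{m,ℓ,s,m} = 1` if `ℓ = s = 0` and `0` otherwise. -/
theorem gcount_recursion (m t ℓ s : ℕ) (ht1 : 1 ≤ t) (ht2 : t ≤ m - 1)
    (hℓ : 2 * ℓ ≤ m) (hs : s ≤ ℓ) :
    ((t - 1) * s + 2 * ℓ ≤ m →
      gcount t ℓ s m =
        ∑ j ∈ Finset.range (ℓ - s + 1),
          Heaviside ((m : ℤ) - 2 * ℓ - t * j - ((t : ℤ) - 1) * s) *
            gcount (t + 1) (ℓ - s) j m) ∧
    (m < (t - 1) * s + 2 * ℓ → gcount t ℓ s m = 0) ∧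
    (∀ ℓ' s' : ℕ, gcount m ℓ' s' m = if ℓ' = 0 ∧ s' = 0 then 1 else 0) := by
  have htm : t < m := by omega
  refine ⟨fun _ => ?_, fun hlt => ?_, gcount_self m⟩
  · rw [gcount_eq_sum_card_okTuples_inter_fiber htm hs]
    exact sum_congr rfl fun j _ => card_okTuples_inter_fiber ht1 htm hℓ hs j
  · rw [gcount_eq_card_okTuples]
    refine @Nat.card_of_isEmpty _ ⟨?_⟩
    rintro ⟨f, hf, rfl, rfl⟩
    have := hf.constraint_at_start ht1 htm hℓ
    omega
end
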